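/- arXiv:1208.4716 — 2 statements merged into one kernel-verified Lean document; each statement's English description precedes it below -/
import Mathlib

section
/- If πᵀt ≠ 0 and uᵀe ≠ 0, then G = (I − P + tuᵀ)⁻¹ is a generalized inverse of I − P, i.e., (I − P)G(I − P) = I − P. -/
open Matrix BigOperators

/-- `P` is a (row) stochastic matrix. -/
def IsStochastic {m : ℕ} (P : Matrix (Fin m) (Fin m) ℝ) : Prop :=
  (∀ i j, 0 ≤ P i j) ∧ ∀ i, ∑ j, P i j = 1

/-- `P` is irreducible: any state leads to any other in some positive number of steps. -/
def IsIrred {m : ℕ} (P : Matrix (Fin m) (Fin m) ℝ) : Prop :=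
  ∀ i j, ∃ n : ℕ, 1 ≤ n ∧ 0 < (P ^ n) i j

lemma mul_vecMulVec {m : ℕ} (A : Matrix (Fin m) (Fin m) ℝ) (v w : Fin m → ℝ) :
    A * vecMulVec v w = vecMulVec (A *ᵥ v) w := by
  ext i j
  simp [Matrix.mul_apply, vecMulVec_apply, Matrix.mulVec, dotProduct, Finset.sum_mul, mul_assoc]

lemma vecMulVec_mul {m : ℕ} (A : Matrix (Fin m) (Fin m) ℝ) (v w : Fin m → ℝ) :
    vecMulVec v w * A = vecMulVec v (w ᵥ* A) := by
  ext i j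
  simp [Matrix.mul_apply, vecMulVec_apply, Matrix.vecMul, dotProduct, Finset.mul_sum, mul_assoc]

lemma vecMulVec_mulVec {m : ℕ} (v w x : Fin m → ℝ) :
    vecMulVec v w *ᵥ x = (w ⬝ᵥ x) • v := by
  ext i
  simp [Matrix.mulVec, vecMulVec_apply, dotProduct, Finset.mul_sum, mul_assoc, mul_comm,
    mul_left_comm]

lemma vecMulVec_smul_right {m : ℕ} (v w : Fin m → ℝ) (c : ℝ) :
    vecMulVec v (c • w) = c • vecMulVec v w := by
  ext i j
  simp [vecMulVec_apply]
  ring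

lemma vecMul_vecMulVec {m : ℕ} (w a b : Fin m → ℝ) :
    w ᵥ* vecMulVec a b = (w ⬝ᵥ a) • b := by
  ext j
  simp [Matrix.vecMul, vecMulVec_apply, dotProduct, Finset.sum_mul, mul_assoc]

lemma isStochastic_pow {m : ℕ} {P : Matrix (Fin m) (Fin m) ℝ} (hP : IsStochastic P) (n : ℕ) :
    IsStochastic (P ^ n) := by
  induction n with
  | zero =>
    constructor
    · intro i j
      by_cases h : i = j <;> simp [Matrix.one_apply, h]
    · intro i
      simp [Matrix.one_apply]
  | succ n ih =>
    rw [pow_succ]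
    constructor
    · intro i j
      rw [Matrix.mul_apply]
      exact Finset.sum_nonneg fun k _ => mul_nonneg (ih.1 i k) (hP.1 k j)
    · intro i
      simp only [Matrix.mul_apply]
      rw [Finset.sum_comm]
      calc ∑ k, ∑ j, (P ^ n) i k * P k j = ∑ k, (P ^ n) i k * ∑ j, P k j := by
              simp [Finset.mul_sum]
        _ = 1 := by simp [hP.2, ih.2 i]

lemma pow_mulVec_fixed {m : ℕ} {P : Matrix (Fin m) (Fin m) ℝ} {x : Fin m → ℝ}
    (hx : P *ᵥ x = x) (n : ℕ) : (P ^ n) *ᵥ x = x := by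
  induction n with
  | zero => simp
  | succ n ih => rw [pow_succ, ← Matrix.mulVec_mulVec, hx, ih]

/-- For an irreducible stochastic matrix, fixed vectors of `P` are constant. -/
lemma fixed_const {m : ℕ} (hm : 0 < m) {P : Matrix (Fin m) (Fin m) ℝ}
    (hP : IsStochastic P) (hirr : IsIrred P) {x : Fin m → ℝ} (hx : P *ᵥ x = x) :
    ∀ i j, x j = x i := by
  -- take index of maximum value
  have : Nonempty (Fin m) := ⟨⟨0, hm⟩⟩
  obtain ⟨i0, -, hmax⟩ := Finset.exists_max_image Finset.univ x ⟨⟨0, hm⟩, Finset.mem_univ _⟩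
  have key : ∀ j, x j = x i0 := by
    intro j
    obtain ⟨n, -, hpos⟩ := hirr i0 j
    have hs := isStochastic_pow hP n
    have hfix : (P ^ n) *ᵥ x = x := pow_mulVec_fixed hx n
    have hsum : ∑ k, (P ^ n) i0 k * (x i0 - x k) = 0 := by
      have h1 : ∑ k, (P ^ n) i0 k * x k = x i0 := by
        have := congrFun hfix i0
        simpa [Matrix.mulVec, dotProduct] using this
      have h2 : ∑ k, (P ^ n) i0 k * x i0 = x i0 := by
        rw [← Finset.sum_mul, hs.2 i0, one_mul]
      simp [mul_sub, Finset.sum_sub_distrib, h1, h2]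
    have hterm : ∀ k ∈ Finset.univ, 0 ≤ (P ^ n) i0 k * (x i0 - x k) := by
      intro k _
      exact mul_nonneg (hs.1 i0 k) (sub_nonneg.2 (hmax k (Finset.mem_univ k)))
    have := (Finset.sum_eq_zero_iff_of_nonneg hterm).1 hsum j (Finset.mem_univ j)
    have h0 : x i0 - x j = 0 := by
      rcases mul_eq_zero.1 this with h | h
      · exact absurd h (ne_of_gt hpos)
      · exact h
    linarith
  intro i j
  rw [key i, key j]

/-- If `πᵀ t ≠ 0` and `uᵀ e ≠ 0`, then `G = (I - P + t uᵀ)⁻¹` is a generalized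
inverse of `I - P`: `(I - P) G (I - P) = I - P`. -/
theorem ginverse_of_IP {m : ℕ} (hm : 0 < m)
    (P : Matrix (Fin m) (Fin m) ℝ) (hP : IsStochastic P) (hirr : IsIrred P)
    (π : Fin m → ℝ) (hπpos : ∀ i, 0 < π i)
    (hπ : Matrix.vecMul π P = π) (hπsum : ∑ i, π i = 1)
    (t u : Fin m → ℝ) (ht : π ⬝ᵥ t ≠ 0) (hu : u ⬝ᵥ (fun _ => (1 : ℝ)) ≠ 0) :
    (1 - P) * (1 - P + Matrix.vecMulVec t u)⁻¹ * (1 - P) = 1 - P := by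
  set c : ℝ := π ⬝ᵥ t with hc
  set A : Matrix (Fin m) (Fin m) ℝ := 1 - P + Matrix.vecMulVec t u with hA
  -- π ᵥ* A = c • u
  have hπA : π ᵥ* A = c • u := by
    rw [hA, Matrix.vecMul_add, Matrix.vecMul_sub, Matrix.vecMul_one, hπ,
      vecMul_vecMulVec]
    simp [hc]
  -- A is invertible
  have hdet : A.det ≠ 0 := by
    intro hdet0
    obtain ⟨v, hv0, hv⟩ := (Matrix.exists_mulVec_eq_zero_iff).2 hdet0
    -- u ⬝ᵥ v = 0
    have huv : u ⬝ᵥ v = 0 := by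
      have h1 : π ⬝ᵥ (A *ᵥ v) = 0 := by rw [hv]; simp
      rw [Matrix.dotProduct_mulVec, hπA] at h1
      have : c * (u ⬝ᵥ v) = 0 := by simpa [smul_dotProduct] using h1
      exact (mul_eq_zero.1 this).resolve_left ht
    -- hence (1 - P) *ᵥ v = 0, i.e. P *ᵥ v = v
    have hPv : P *ᵥ v = v := by
      have h2 : A *ᵥ v = (1 - P) *ᵥ v + (u ⬝ᵥ v) • t := by
        rw [hA, Matrix.add_mulVec, vecMulVec_mulVec]
      rw [hv, huv] at h2
      have h3 : (1 - P) *ᵥ v = 0 := by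
        have := h2.symm
        simpa using this
      have := h3
      rw [Matrix.sub_mulVec, Matrix.one_mulVec, sub_eq_zero] at this
      exact this.symm
    -- v constant
    have hconst := fixed_const hm hP hirr hPv
    set i0 : Fin m := ⟨0, hm⟩
    have hval : ∀ j, v j = v i0 := fun j => hconst i0 j
    have : u ⬝ᵥ v = (u ⬝ᵥ (fun _ => (1 : ℝ))) * v i0 := by
      simp only [dotProduct]
      rw [Finset.sum_mul]
      exact Finset.sum_congr rfl fun j _ => by rw [hval j]; ring
    rw [huv] at this
    have hvi0 : v i0 = 0 := by
      rcases mul_eq_zero.1 this.symm with h | h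
      · exact absurd h hu
      · exact h
    apply hv0
    funext j
    simp [hval j, hvi0]
  have hunit : IsUnit A.det := isUnit_iff_ne_zero.2 hdet
  have hAAinv : A * A⁻¹ = 1 := Matrix.mul_nonsing_inv A hunit
  -- u ᵥ* A⁻¹ = c⁻¹ • π
  have huAinv : u ᵥ* A⁻¹ = c⁻¹ • π := by
    have h1 : (π ᵥ* A) ᵥ* A⁻¹ = π := by
      rw [Matrix.vecMul_vecMul, hAAinv, Matrix.vecMul_one]
    rw [hπA, Matrix.smul_vecMul] at h1
    rw [← h1, smul_smul, inv_mul_cancel₀ ht, one_smul]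
  -- (1 - P) * A⁻¹ = 1 - c⁻¹ • vecMulVec t π
  have hIP : (1 - P) = A - Matrix.vecMulVec t u := by rw [hA, add_sub_cancel_right]
  have hstep : (1 - P) * A⁻¹ = 1 - c⁻¹ • Matrix.vecMulVec t π := by
    rw [hIP, Matrix.sub_mul, hAAinv, vecMulVec_mul, huAinv, vecMulVec_smul_right]
  rw [hstep, Matrix.sub_mul, Matrix.one_mul, Matrix.smul_mul, vecMulVec_mul]
  have hπIP : π ᵥ* (1 - P) = 0 := by
    rw [Matrix.vecMul_sub, Matrix.vecMul_one, hπ, sub_self]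
  rw [hπIP]
  have hz : Matrix.vecMulVec t (0 : Fin m → ℝ) = 0 := by
    ext i j
    simp [vecMulVec_apply]
  rw [hz]
  simp
end

section
/- Kemeny's constant equals the trace of the fundamental matrix: K = tr(Z), where Z = (I − P + eπᵀ)⁻¹ and K = Σ_j π_j m_{ij} for any i. -/
open Matrix BigOperators

lemma pow_stochastic {m : ℕ} {P : Matrix (Fin m) (Fin m) ℝ} (hP : IsStochastic P) (n : ℕ) :
    (∀ i j, 0 ≤ (P ^ n) i j) ∧ ∀ i, ∑ j, (P ^ n) i j = 1 := by
  induction n with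
  | zero =>
    constructor
    · intro i j
      by_cases h : i = j <;> simp [Matrix.one_apply, h]
    · intro i; simp [Matrix.one_apply]
  | succ n ih =>
    constructor
    · intro i j
      rw [pow_succ, Matrix.mul_apply]
      exact Finset.sum_nonneg fun k _ => mul_nonneg (ih.1 i k) (hP.1 k j)
    · intro i
      rw [pow_succ]
      simp only [Matrix.mul_apply]
      rw [Finset.sum_comm]
      calc ∑ k, ∑ j, (P ^ n) i k * P k j = ∑ k, (P ^ n) i k * ∑ j, P k j := by
            simp [Finset.mul_sum]
        _ = 1 := by simp [hP.2, ih.2 i]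

lemma harmonic_const {m : ℕ} (hm : 0 < m) {P : Matrix (Fin m) (Fin m) ℝ}
    (hP : IsStochastic P) (hirr : IsIrred P) {x : Fin m → ℝ}
    (hx : P *ᵥ x = x) : ∀ i j, x i = x j := by
  have hpow : ∀ n, (P ^ n) *ᵥ x = x := by
    intro n; induction n with
    | zero => simp
    | succ n ih => rw [pow_succ, ← Matrix.mulVec_mulVec, hx, ih]
  haveI : Nonempty (Fin m) := ⟨⟨0, hm⟩⟩
  obtain ⟨i0, -, hi0⟩ := Finset.exists_max_image Finset.univ x ⟨Classical.arbitrary (Fin m), Finset.mem_univ _⟩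
  have key : ∀ j, x j = x i0 := by
    intro j
    obtain ⟨n, -, hpos⟩ := hirr i0 j
    have hQ := pow_stochastic hP n
    have h1 : ∑ k, (P ^ n) i0 k * x k = x i0 := congrFun (hpow n) i0
    have hsum : ∑ k, (P ^ n) i0 k * (x i0 - x k) = 0 := by
      simp only [mul_sub]
      rw [Finset.sum_sub_distrib, ← Finset.sum_mul, hQ.2 i0, h1]
      ring
    have hterm := (Finset.sum_eq_zero_iff_of_nonneg
      (fun k _ => mul_nonneg (hQ.1 i0 k) (sub_nonneg.mpr (hi0 k (Finset.mem_univ k))))).mp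
      hsum j (Finset.mem_univ j)
    have := mul_eq_zero.mp hterm
    rcases this with h | h
    · exact absurd h (ne_of_gt hpos)
    · linarith [sub_eq_zero.mp h]
  intro i j; rw [key i, key j]

lemma A_isUnit_det {m : ℕ} (hm : 0 < m) {P : Matrix (Fin m) (Fin m) ℝ}
    (hP : IsStochastic P) (hirr : IsIrred P) {π : Fin m → ℝ}
    (hπ : Matrix.vecMul π P = π) (hπsum : ∑ i, π i = 1) :
    IsUnit (1 - P + Matrix.vecMulVec (fun _ => (1 : ℝ)) π).det := by
  set A := (1 : Matrix (Fin m) (Fin m) ℝ) - P + Matrix.vecMulVec (fun _ => (1 : ℝ)) π with hA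
  rw [isUnit_iff_ne_zero]
  intro hdet
  obtain ⟨v, hv0, hAv⟩ := Matrix.exists_mulVec_eq_zero_iff.mpr hdet
  -- entrywise: v i - (P *ᵥ v) i + ∑ j, π j * v j = 0
  have hentry : ∀ i, v i - (P *ᵥ v) i + ∑ j, π j * v j = 0 := by
    intro i
    have h := congrFun hAv i
    simp only [hA, Matrix.mulVec, dotProduct, Matrix.add_apply, Matrix.sub_apply,
      Matrix.vecMulVec_apply, one_mul, Pi.zero_apply] at h
    have hsplit : ∑ x, ((1 : Matrix (Fin m) (Fin m) ℝ) i x - P i x + π x) * v x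
        = (∑ x, (1 : Matrix (Fin m) (Fin m) ℝ) i x * v x) - (∑ x, P i x * v x)
          + ∑ x, π x * v x := by
      rw [← Finset.sum_sub_distrib, ← Finset.sum_add_distrib]
      exact Finset.sum_congr rfl fun x _ => by ring
    have hone : ∑ x, (1 : Matrix (Fin m) (Fin m) ℝ) i x * v x = v i := by
      simp [Matrix.one_apply]
    rw [hsplit, hone] at h
    simpa [Matrix.mulVec, dotProduct] using h
  set c := ∑ j, π j * v j with hc
  -- dot with π gives c = 0
  have hc0 : c = 0 := by
    have h2 : ∑ i, π i * (v i - (P *ᵥ v) i + c) = 0 :=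
      Finset.sum_eq_zero fun i _ => by rw [hentry i, mul_zero]
    have h3 : ∑ i, π i * (P *ᵥ v) i = c := by
      simp only [Matrix.mulVec, dotProduct, Finset.mul_sum]
      rw [Finset.sum_comm]
      simp only [hc]
      apply Finset.sum_congr rfl
      intro j _
      have := congrFun hπ j
      simp only [Matrix.vecMul, dotProduct] at this
      rw [← this, Finset.sum_mul]
      apply Finset.sum_congr rfl; intro i _; ring
    have h4 : ∑ i, π i * (v i - (P *ᵥ v) i + c) =
        c - c + c * ∑ i, π i := by
      simp only [mul_add, mul_sub, Finset.sum_add_distrib, Finset.sum_sub_distrib, h3, hc]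
      rw [← Finset.sum_mul]
      ring
    rw [h4, hπsum] at h2; linarith
  have hxP : P *ᵥ v = v := by
    funext i
    have := hentry i
    rw [hc0] at this
    linarith
  have hconst := harmonic_const hm hP hirr hxP
  haveI : Nonempty (Fin m) := ⟨⟨0, hm⟩⟩
  have hv : ∀ i, v i = 0 := by
    intro i
    have hvi : c = v i := by
      rw [hc]
      calc ∑ j, π j * v j = ∑ j, π j * v i :=
            Finset.sum_congr rfl fun j _ => by rw [hconst j i]
        _ = (∑ j, π j) * v i := by rw [Finset.sum_mul]
        _ = v i := by rw [hπsum, one_mul]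
    rw [← hvi, hc0]
  exact hv0 (funext hv)

/-- Kemeny's constant equals the trace of the fundamental matrix `Z = (I - P + eπᵀ)⁻¹`. -/
theorem kemeny_eq_trace_Z {m : ℕ} (hm : 0 < m)
    (P : Matrix (Fin m) (Fin m) ℝ) (hP : IsStochastic P) (hirr : IsIrred P)
    (π : Fin m → ℝ) (hπpos : ∀ i, 0 < π i)
    (hπ : Matrix.vecMul π P = π) (hπsum : ∑ i, π i = 1)
    (M : Matrix (Fin m) (Fin m) ℝ)
    (hM : ∀ i j, M i j = 1 + ∑ k ∈ Finset.univ.erase j, P i k * M k j) :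
    ∀ i : Fin m, ∑ j, π j * M i j =
      Matrix.trace ((1 - P + Matrix.vecMulVec (fun _ => (1 : ℝ)) π)⁻¹) := by
  intro i
  set A := (1 : Matrix (Fin m) (Fin m) ℝ) - P + Matrix.vecMulVec (fun _ => (1 : ℝ)) π with hA
  have hdet := A_isUnit_det hm hP hirr hπ hπsum
  set Z := A⁻¹ with hZdef
  have hZA : Z * A = 1 := Matrix.nonsing_inv_mul A hdet
  have hπne : ∀ j, π j ≠ 0 := fun j => ne_of_gt (hπpos j)
  have hAapp : ∀ a b, A a b = (1 : Matrix (Fin m) (Fin m) ℝ) a b - P a b + π b := by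
    intro a b
    simp [hA, Matrix.add_apply, Matrix.sub_apply, Matrix.vecMulVec_apply]
  have hπcol : ∀ k, ∑ a, π a * P a k = π k := by
    intro k
    have := congrFun hπ k
    simpa [Matrix.vecMul, dotProduct] using this
  -- Step 1: π j * M j j = 1
  have hMd : ∀ j, π j * M j j = 1 := by
    intro j
    have h1 : ∑ a, π a * M a j = 1 + ∑ k ∈ Finset.univ.erase j, π k * M k j := by
      calc ∑ a, π a * M a j
          = ∑ a, (π a + ∑ k ∈ Finset.univ.erase j, π a * P a k * M k j) := by
            refine Finset.sum_congr rfl fun a _ => ?_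
            rw [hM a j, mul_add, mul_one, Finset.mul_sum]
            congr 1
            exact Finset.sum_congr rfl fun k _ => by ring
        _ = (∑ a, π a) + ∑ a, ∑ k ∈ Finset.univ.erase j, π a * P a k * M k j := by
            rw [Finset.sum_add_distrib]
        _ = 1 + ∑ k ∈ Finset.univ.erase j, π k * M k j := by
            rw [hπsum, Finset.sum_comm]
            congr 1
            refine Finset.sum_congr rfl fun k _ => ?_
            rw [← Finset.sum_mul, hπcol k]
    have h2 := Finset.sum_erase_add Finset.univ (fun k => π k * M k j) (Finset.mem_univ j)
    beta_reduce at h2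
    linarith
  have hMdd : ∀ j, M j j = 1 / π j := by
    intro j
    rw [eq_div_iff (hπne j)]
    linarith [hMd j]
  -- Step 2: row sums of Z are 1
  have hZe : ∀ a, ∑ k, Z a k = 1 := by
    have hAe : A *ᵥ (fun _ => (1 : ℝ)) = fun _ => 1 := by
      funext a
      simp only [Matrix.mulVec, dotProduct, mul_one]
      calc ∑ b, A a b = ∑ b, ((1 : Matrix (Fin m) (Fin m) ℝ) a b - P a b + π b) :=
            Finset.sum_congr rfl fun b _ => hAapp a b
        _ = (∑ b, (1 : Matrix (Fin m) (Fin m) ℝ) a b) - (∑ b, P a b) + ∑ b, π b := by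
            rw [← Finset.sum_sub_distrib, ← Finset.sum_add_distrib]
        _ = 1 := by
            rw [hP.2 a, hπsum]
            simp [Matrix.one_apply]
    have hZ1 : Z *ᵥ (A *ᵥ (fun _ => (1 : ℝ))) = fun _ => 1 := by
      rw [Matrix.mulVec_mulVec, hZA, Matrix.one_mulVec]
    rw [hAe] at hZ1
    intro a
    have := congrFun hZ1 a
    simpa [Matrix.mulVec, dotProduct, mul_one] using this
  -- Step 3: Z * P entrywise
  have hZP : ∀ a b, ∑ k, Z a k * P k b = Z a b - (1 : Matrix (Fin m) (Fin m) ℝ) a b + π b := by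
    intro a b
    have hPk : ∀ k, P k b = (1 : Matrix (Fin m) (Fin m) ℝ) k b - A k b + π b := by
      intro k; have := hAapp k b; linarith
    calc ∑ k, Z a k * P k b
        = ∑ k, (Z a k * (1 : Matrix (Fin m) (Fin m) ℝ) k b - Z a k * A k b + Z a k * π b) :=
          Finset.sum_congr rfl fun k _ => by rw [hPk k]; ring
      _ = (∑ k, Z a k * (1 : Matrix (Fin m) (Fin m) ℝ) k b) - (∑ k, Z a k * A k b)
          + (∑ k, Z a k) * π b := by
          rw [Finset.sum_mul, ← Finset.sum_sub_distrib, ← Finset.sum_add_distrib]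
      _ = Z a b - (1 : Matrix (Fin m) (Fin m) ℝ) a b + π b := by
          have h1 : ∑ k, Z a k * (1 : Matrix (Fin m) (Fin m) ℝ) k b = Z a b := by
            simp [Matrix.one_apply]
          have h2 : ∑ k, Z a k * A k b = (1 : Matrix (Fin m) (Fin m) ℝ) a b := by
            rw [← Matrix.mul_apply, hZA]
          rw [h1, h2, hZe a, one_mul]
  -- Step 4: (A * M) entrywise
  have hAM : ∀ a b, ∑ k, A a k * M k b = 1 - P a b * M b b + ∑ k, π k * M k b := by
    intro a b
    have hfull : ∑ k, P a k * M k b =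
        (∑ k ∈ Finset.univ.erase b, P a k * M k b) + P a b * M b b :=
      (Finset.sum_erase_add Finset.univ (fun k => P a k * M k b) (Finset.mem_univ b)).symm
    calc ∑ k, A a k * M k b
        = ∑ k, ((1 : Matrix (Fin m) (Fin m) ℝ) a k * M k b - P a k * M k b + π k * M k b) := by
          refine Finset.sum_congr rfl fun k _ => ?_
          rw [hAapp a k]; ring
      _ = (∑ k, (1 : Matrix (Fin m) (Fin m) ℝ) a k * M k b) - (∑ k, P a k * M k b)
          + ∑ k, π k * M k b := by
          rw [← Finset.sum_sub_distrib, ← Finset.sum_add_distrib]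
      _ = 1 - P a b * M b b + ∑ k, π k * M k b := by
          have h1 : ∑ k, (1 : Matrix (Fin m) (Fin m) ℝ) a k * M k b = M a b := by
            simp [Matrix.one_apply]
          rw [h1, hfull, hM a b]
          ring
  -- Step 5: M entrywise via Z
  have hME : ∀ a b, M a b =
      (1 + ∑ k, π k * M k b) - (Z a b - (1 : Matrix (Fin m) (Fin m) ℝ) a b + π b) * M b b := by
    intro a b
    have hMeq : M = Z * (A * M) := by rw [← Matrix.mul_assoc, hZA, Matrix.one_mul]
    calc M a b = ∑ k, Z a k * (∑ l, A k l * M l b) := by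
          conv_lhs => rw [hMeq]
          rw [Matrix.mul_apply]
          exact Finset.sum_congr rfl fun k _ => by rw [Matrix.mul_apply]
      _ = ∑ k, Z a k * (1 - P k b * M b b + ∑ l, π l * M l b) :=
          Finset.sum_congr rfl fun k _ => by rw [hAM k b]
      _ = ∑ k, (Z a k * (1 + ∑ l, π l * M l b) - Z a k * P k b * M b b) :=
          Finset.sum_congr rfl fun k _ => by ring
      _ = (∑ k, Z a k) * (1 + ∑ l, π l * M l b) - (∑ k, Z a k * P k b) * M b b := by
          rw [Finset.sum_mul, Finset.sum_mul, ← Finset.sum_sub_distrib]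
      _ = (1 + ∑ k, π k * M k b)
          - (Z a b - (1 : Matrix (Fin m) (Fin m) ℝ) a b + π b) * M b b := by
          rw [hZe a, one_mul, hZP a b]
  -- Step 6: column weighted sums equal Z b b / π b
  have hsb : ∀ b, ∑ k, π k * M k b = Z b b / π b := by
    intro b
    have h := hME b b
    rw [hMdd b, Matrix.one_apply_eq] at h
    have hπb := hπne b
    field_simp at h
    field_simp
    linarith
  -- Final computation
  have hMentry : ∀ b, π b * M i b =
      Z b b + (1 : Matrix (Fin m) (Fin m) ℝ) i b - Z i b := by
    intro b
    have h := hME i b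
    rw [hMdd b, hsb b] at h
    have hπb := hπne b
    rw [h]
    field_simp
    ring
  calc ∑ j, π j * M i j
      = ∑ j, (Z j j + (1 : Matrix (Fin m) (Fin m) ℝ) i j - Z i j) :=
        Finset.sum_congr rfl fun j _ => hMentry j
    _ = (∑ j, Z j j) + (∑ j, (1 : Matrix (Fin m) (Fin m) ℝ) i j) - ∑ j, Z i j := by
        rw [← Finset.sum_add_distrib, ← Finset.sum_sub_distrib]
    _ = Matrix.trace Z := by
        rw [hZe i]
        simp [Matrix.trace, Matrix.diag, Matrix.one_apply]
end
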